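/- If x is a lim sup-stable sequence in a complete Boolean algebra B (i.e., limsup y = limsup x for every subsequence y of x), then the closure of {x_n : n ∈ ω} in the topology O_{λ_ls} equals (limsup x)↑ ∪ ⋃_{n∈ω} x_n↑. -/

import Mathlib

/-!
A set is closed in `O_{λ_ls}` as soon as it is upward closed and contains the limsup of every
sequence in it, because limsups only drop along subsequences. For the candidate set this holds:
a sequence `u` in it has a subsequence lying in `(limsup x)↑`, or one lying in cones `x (k i)↑`.
In the latter case either one index `k i = J` recurs infinitely often, giving `x J ≤ limsup u`,
or `k` has a strictly increasing subsequence `k ∘ φ`, and stability gives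
`limsup x = limsup (x ∘ k ∘ φ) ≤ limsup u`. Conversely, every point above `limsup x` is a
`λ_ls`-limit of `x` itself, and every point above `x n` is one of the constant sequence `x n`.
-/

/-- The liminf of a sequence in a complete Boolean algebra. -/
def bLiminf {B : Type*} [CompleteBooleanAlgebra B] (x : ℕ → B) : B :=
  ⨆ k, ⨅ n, ⨅ _ : k ≤ n, x n

/-- The limsup of a sequence in a complete Boolean algebra. -/
def bLimsup {B : Type*} [CompleteBooleanAlgebra B] (x : ℕ → B) : B :=
  ⨅ k, ⨆ n, ⨆ _ : k ≤ n, x n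

/-- The convergence `λ_ls(x) = (limsup x)↑`. -/
def lamLs {B : Type*} [CompleteBooleanAlgebra B] (x : ℕ → B) : Set B :=
  {b : B | bLimsup x ≤ b}

/-- The convergence `λ_li(x) = (liminf x)↓`. -/
def lamLi {B : Type*} [CompleteBooleanAlgebra B] (x : ℕ → B) : Set B :=
  {b : B | b ≤ bLiminf x}

/-- The topology `O_λ` generated by a convergence `λ`: a set is open iff
whenever it meets `λ(x)` it contains all but finitely many terms of `x`. -/
def convTop {X : Type*} (lam : (ℕ → X) → Set X) : TopologicalSpace X where
  IsOpen O := ∀ x : ℕ → X, (O ∩ lam x).Nonempty → ∀ᶠ n in Filter.atTop, x n ∈ O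
  isOpen_univ := fun x _ => Filter.Eventually.of_forall fun _ => Set.mem_univ _
  isOpen_inter := by
    intro s t hs ht x hx
    obtain ⟨a, has, hal⟩ := hx
    exact ((hs x ⟨a, has.1, hal⟩).and (ht x ⟨a, has.2, hal⟩)).mono
      fun n hn => ⟨hn.1, hn.2⟩
  isOpen_sUnion := by
    intro S hS x hx
    obtain ⟨a, haU, hal⟩ := hx
    obtain ⟨O, hOS, haO⟩ := haU
    exact (hS O hOS x ⟨a, haO, hal⟩).mono fun n hn => Set.mem_sUnion.2 ⟨O, hOS, hn⟩

open Filter Topology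

section ConvTop

variable {X : Type*} {lam : (ℕ → X) → Set X}

theorem mem_closure_convTop_of_mem_lam {S : Set X} {u : ℕ → X} (hu : ∀ n, u n ∈ S) {b : X}
    (hb : b ∈ lam u) : b ∈ @closure X (convTop lam) S := by
  let := convTop lam
  refine mem_closure_iff.2 fun O hO hbO => ?_
  obtain ⟨n, hn⟩ := (hO u ⟨b, hbO, hb⟩).exists
  exact ⟨u n, hn, hu n⟩

theorem isClosed_convTop {S : Set X} (hlam : ∀ y g, StrictMono g → lam y ⊆ lam (y ∘ g))
    (hS : ∀ u, (∀ n, u n ∈ S) → lam u ⊆ S) : IsClosed[convTop lam] S := by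
  let := convTop lam
  refine isOpen_compl_iff.1 fun y ⟨a, haS, hay⟩ => ?_
  by_contra hev
  obtain ⟨g, hg, hgS⟩ :=
    extraction_of_frequently_atTop ((not_eventually.1 hev).mono fun _ => not_not.1)
  exact haS (hS (y ∘ g) hgS (hlam y g hg hay))

end ConvTop

theorem Nat.exists_frequently_eq_or_exists_strictMono_comp (k : ℕ → ℕ) :
    (∃ J, ∃ᶠ i in atTop, k i = J) ∨ ∃ φ : ℕ → ℕ, StrictMono φ ∧ StrictMono (k ∘ φ) := by
  refine or_iff_not_imp_left.2 fun hk => strictMono_subseq_of_tendsto_atTop ?_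
  have hfin : ∀ J, Finite (k ⁻¹' {J}) := fun J =>
    (Set.not_infinite.1 fun hinf => hk ⟨J, Nat.frequently_atTop_iff_infinite.2 hinf⟩).to_subtype
  simpa only [Nat.cofinite_eq_atTop] using Tendsto.cofinite_of_finite_preimage_singleton hfin

section Limsup

variable {B : Type*} [CompleteBooleanAlgebra B]

theorem bLimsup_mono {u v : ℕ → B} (h : ∀ n, u n ≤ v n) : bLimsup u ≤ bLimsup v :=
  iInf_mono fun _ => iSup_mono fun n => iSup_mono fun _ => h n

theorem le_bLimsup_of_frequently_le {u : ℕ → B} {c : B} (h : ∃ᶠ n in atTop, c ≤ u n) :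
    c ≤ bLimsup u :=
  le_iInf fun k =>
    let ⟨n, hkn, hn⟩ := frequently_atTop.1 h k
    le_iSup_of_le n (le_iSup_of_le hkn hn)

theorem bLimsup_comp_le (u : ℕ → B) {g : ℕ → ℕ} (hg : StrictMono g) :
    bLimsup (u ∘ g) ≤ bLimsup u :=
  le_iInf fun k => (iInf_le _ k).trans <| iSup_le fun m => iSup_le fun hm =>
    le_iSup_of_le (g m) (le_iSup_of_le (hm.trans hg.le_apply) le_rfl)

theorem bLimsup_const (c : B) : bLimsup (fun _ : ℕ => c) = c :=
  le_antisymm ((iInf_le _ 0).trans (iSup_le fun _ => iSup_le fun _ => le_rfl))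
    (le_bLimsup_of_frequently_le (Eventually.of_forall fun _ => le_rfl).frequently)

theorem lamLs_subset_lamLs_comp (y : ℕ → B) {g : ℕ → ℕ} (hg : StrictMono g) :
    lamLs y ⊆ lamLs (y ∘ g) :=
  fun _ hb => (bLimsup_comp_le y hg).trans hb

def LimsupStable (x : ℕ → B) : Prop :=
  ∀ f : ℕ → ℕ, StrictMono f → bLimsup (x ∘ f) = bLimsup x

theorem LimsupStable.bLimsup_le_or_exists_le_bLimsup {x u : ℕ → B} (hx : LimsupStable x)
    (hu : ∀ n, bLimsup x ≤ u n ∨ ∃ k, x k ≤ u n) :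
    bLimsup x ≤ bLimsup u ∨ ∃ J, x J ≤ bLimsup u := by
  rcases frequently_or_distrib.1 (Eventually.of_forall (f := atTop) hu).frequently with h | h
  · exact Or.inl (le_bLimsup_of_frequently_le h)
  obtain ⟨g, hg, hxg⟩ := extraction_of_frequently_atTop h
  choose k hk using hxg
  have hug : bLimsup (u ∘ g) ≤ bLimsup u := bLimsup_comp_le u hg
  rcases Nat.exists_frequently_eq_or_exists_strictMono_comp k with ⟨J, hJ⟩ | ⟨φ, hφ, hkφ⟩
  · refine Or.inr ⟨J, le_trans ?_ hug⟩
    exact le_bLimsup_of_frequently_le (hJ.mono fun i hi => hi ▸ hk i)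
  · refine Or.inl ?_
    calc bLimsup x = bLimsup (x ∘ (k ∘ φ)) := (hx _ hkφ).symm
      _ ≤ bLimsup ((u ∘ g) ∘ φ) := bLimsup_mono fun i => hk (φ i)
      _ ≤ bLimsup (u ∘ g) := bLimsup_comp_le _ hφ
      _ ≤ bLimsup u := hug

end Limsup

/-- If `x` is a lim sup-stable sequence (every subsequence has the same limsup),
then the closure of `{xₙ : n ∈ ω}` in `O_{λ_ls}` is
`(limsup x)↑ ∪ ⋃ₙ xₙ↑`. -/
theorem closure_of_limsup_stable {B : Type*} [CompleteBooleanAlgebra B]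
    (x : ℕ → B) (hx : ∀ f : ℕ → ℕ, StrictMono f → bLimsup (x ∘ f) = bLimsup x) :
    @closure B (convTop lamLs) {b : B | ∃ n, b = x n} =
      {b : B | bLimsup x ≤ b} ∪ ⋃ n, {b : B | x n ≤ b} := by
  refine Set.Subset.antisymm (@closure_minimal _ (convTop lamLs) _ _ ?_ ?_) ?_
  · rintro _ ⟨n, rfl⟩
    exact Or.inr (Set.mem_iUnion.2 ⟨n, le_rfl⟩)
  · refine isClosed_convTop (fun y g hg => lamLs_subset_lamLs_comp y hg) fun u hu b hb => ?_
    have hu' : ∀ n, bLimsup x ≤ u n ∨ ∃ k, x k ≤ u n := by simpa using hu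
    rcases LimsupStable.bLimsup_le_or_exists_le_bLimsup hx hu' with h | ⟨J, hJ⟩
    · exact Or.inl (h.trans hb)
    · exact Or.inr (Set.mem_iUnion.2 ⟨J, hJ.trans hb⟩)
  · rintro b (hb | hb)
    · exact mem_closure_convTop_of_mem_lam (fun n => by exact ⟨n, rfl⟩) hb
    · obtain ⟨n, hn⟩ := Set.mem_iUnion.1 hb
      refine mem_closure_convTop_of_mem_lam (u := fun _ => x n) (fun _ => by exact ⟨n, rfl⟩) ?_
      show bLimsup (fun _ => x n) ≤ b
      rwa [bLimsup_const]
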